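/- For any continuous v on [-1,1], the defect v − P^- v has Legendre expansion starting at degree k: ∫_{-1}^1 (v − P^- v) L_m ds = 0 for all 0 ≤ m ≤ k−1, and the coefficient of L_k in the expansion of v − P^- v equals −v(1) + (1/2)∫_{-1}^1 v Σ_{m=0}^{k} (2m+1) L_m ds. -/

import Mathlib

open Polynomial Finset

/-- Legendre polynomial of degree `m` on `[-1,1]`, normalized so `L_m(1) = 1`. -/
noncomputable def leg (m : ℕ) : Polynomial ℝ :=
  Polynomial.C (((2 : ℝ) ^ m * Nat.factorial m)⁻¹) *
    (fun p => Polynomial.derivative p)^[m] ((Polynomial.X ^ 2 - 1) ^ m)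

/-- Degree-`k` right Gauss–Radau projection on `[-1,1]`. -/
def IsRadauNeg (k : ℕ) (v : ℝ → ℝ) (p : Polynomial ℝ) : Prop :=
  p.natDegree ≤ k ∧
  (∀ w : Polynomial ℝ, w.natDegree + 1 ≤ k →
    ∫ s in (-1 : ℝ)..1, (v s - p.eval s) * w.eval s = 0) ∧
  p.eval 1 = v 1

/-! The kernel `K_k = ∑_{m ≤ k} (2m+1) L_m` reproduces values at `1`: `∫ f K_k = 2 f(1)` for
`deg f ≤ k`. Indeed the recurrence `L_{m+2}' = (2m+3) L_{m+1} + L_m'` telescopes `K_k` into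
`(L_{k+1} + L_k)'`; integrating by parts, the remaining integral pairs `f'` with `L_{k+1} + L_k`
and vanishes by orthogonality, while the boundary term is `2 f(1)` because
`(L_{k+1} + L_k)(1) = 2` and `(L_{k+1} + L_k)(-1) = 0`.

Pairing the defect `v - P^- v` with `K_k` therefore gives `∫ v K_k - 2 v(1)`; on the other hand
all moments of the defect against `L_m`, `m < k`, vanish by definition of `P^-`, leaving
`(2k+1) ∫ (v - P^- v) L_k`. -/

open MeasureTheory
open scoped Nat

section Rodrigues

variable {R : Type*} [CommRing R]

variable (R) in
noncomputable def rodrigues (n : ℕ) : R[X] := derivative^[n] ((X ^ 2 - 1) ^ n)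

lemma eval_iterate_derivative_X_sub_C_pow_mul (c : R) (n : ℕ) (g : R[X]) :
    (derivative^[n] ((X - C c) ^ n * g)).eval c = n ! * g.eval c := by
  rw [iterate_derivative_mul, eval_finsetSum, sum_eq_single 0]
  · simp [iterate_derivative_X_sub_pow_self]
  · intro i hi hi0
    rw [iterate_derivative_X_sub_pow, Nat.sub_sub_self (Nat.lt_succ_iff.1 (mem_range.1 hi))]
    simp [zero_pow hi0]
  · simp

lemma X_sq_sub_one_eq_mul : (X ^ 2 - 1 : R[X]) = (X - C 1) * (X - C (-1)) := by
  simp only [map_one, map_neg]; ring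

lemma rodrigues_eval_one (n : ℕ) : (rodrigues R n).eval 1 = 2 ^ n * n ! := by
  rw [rodrigues, X_sq_sub_one_eq_mul, mul_pow, eval_iterate_derivative_X_sub_C_pow_mul]
  simp only [eval_pow, eval_sub, eval_X, eval_C]
  norm_num; ring

lemma rodrigues_eval_neg_one (n : ℕ) : (rodrigues R n).eval (-1) = (-2) ^ n * n ! := by
  rw [rodrigues, X_sq_sub_one_eq_mul, mul_pow, mul_comm, eval_iterate_derivative_X_sub_C_pow_mul]
  simp only [eval_pow, eval_sub, eval_X, eval_C]
  norm_num; ring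

lemma natDegree_rodrigues_le (n : ℕ) : (rodrigues R n).natDegree ≤ n := by
  have h2 : (X ^ 2 - 1 : R[X]).natDegree ≤ 2 := by compute_degree
  have : ((X ^ 2 - 1 : R[X]) ^ n).natDegree ≤ n * 2 :=
    natDegree_pow_le.trans (Nat.mul_le_mul_left n h2)
  exact (natDegree_iterate_derivative _ _).trans (by omega)

lemma derivative_X_sq_sub_one_pow (n : ℕ) :
    derivative ((X ^ 2 - 1 : R[X]) ^ (n + 1)) =
      ((2 * (n + 1) : ℕ) : R[X]) * X * (X ^ 2 - 1) ^ n := by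
  rw [derivative_pow, derivative_sub, derivative_X_sq, derivative_one]
  simp only [map_natCast, map_ofNat, Nat.add_sub_cancel]; push_cast; ring

lemma derivative_derivative_X_sq_sub_one_pow (m : ℕ) :
    derivative (derivative ((X ^ 2 - 1 : R[X]) ^ (m + 2))) =
      ((2 * (m + 2) * (2 * m + 3) : ℕ) : R[X]) * (X ^ 2 - 1) ^ (m + 1) +
        ((4 * (m + 1) * (m + 2) : ℕ) : R[X]) * (X ^ 2 - 1) ^ m := by
  rw [derivative_X_sq_sub_one_pow, derivative_mul, derivative_mul, derivative_X,
    derivative_X_sq_sub_one_pow, derivative_natCast]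
  push_cast; ring

lemma derivative_rodrigues_add_two (m : ℕ) :
    derivative (rodrigues R (m + 2)) =
      ((2 * (m + 2) * (2 * m + 3) : ℕ) : R[X]) * rodrigues R (m + 1) +
        ((4 * (m + 1) * (m + 2) : ℕ) : R[X]) * derivative (rodrigues R m) := by
  rw [rodrigues, ← Function.iterate_succ_apply' derivative, Function.iterate_succ_apply,
    Function.iterate_succ_apply, derivative_derivative_X_sq_sub_one_pow, iterate_map_add,
    iterate_derivative_natCast_mul, iterate_derivative_natCast_mul, rodrigues, rodrigues,
    ← Function.iterate_succ_apply' derivative]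

end Rodrigues

lemma leg_eq_C_mul_rodrigues (n : ℕ) : leg n = C ((2 ^ n * n ! : ℝ)⁻¹) * rodrigues ℝ n := rfl

lemma leg_eval_one (n : ℕ) : (leg n).eval 1 = 1 := by
  rw [leg_eq_C_mul_rodrigues, eval_mul, eval_C, rodrigues_eval_one]
  exact inv_mul_cancel₀ (by positivity)

lemma leg_eval_neg_one (n : ℕ) : (leg n).eval (-1) = (-1) ^ n := by
  rw [leg_eq_C_mul_rodrigues, eval_mul, eval_C, rodrigues_eval_neg_one, neg_pow]
  field_simp

lemma natDegree_leg_le (n : ℕ) : (leg n).natDegree ≤ n :=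
  (natDegree_C_mul_le _ _).trans (natDegree_rodrigues_le n)

lemma leg_zero : leg 0 = 1 := by simp [leg]

lemma leg_one : leg 1 = X := by
  simp only [leg_eq_C_mul_rodrigues, rodrigues, Function.iterate_one, pow_one, derivative_sub,
    derivative_X_sq, derivative_one, sub_zero, ← mul_assoc, ← C_mul]
  norm_num

lemma derivative_leg_add_two (m : ℕ) :
    derivative (leg (m + 2)) = C (2 * (m + 1 : ℝ) + 1) * leg (m + 1) + derivative (leg m) := by
  have h1 : (2 ^ (m + 2) * (m + 2)! : ℝ)⁻¹ * ((2 * (m + 2) * (2 * m + 3) : ℕ) : ℝ) =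
      (2 * (m + 1 : ℝ) + 1) * (2 ^ (m + 1) * (m + 1)! : ℝ)⁻¹ := by
    rw [Nat.factorial_succ (m + 1)]; push_cast; field_simp; ring
  have h2 : (2 ^ (m + 2) * (m + 2)! : ℝ)⁻¹ * ((4 * (m + 1) * (m + 2) : ℕ) : ℝ) =
      (2 ^ m * m ! : ℝ)⁻¹ := by
    rw [Nat.factorial_succ (m + 1), Nat.factorial_succ m]; push_cast; field_simp; ring
  simp only [leg_eq_C_mul_rodrigues, derivative_C_mul]
  rw [derivative_rodrigues_add_two]
  simp only [C_mul', ← nsmul_eq_mul, ← Nat.cast_smul_eq_nsmul ℝ]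
  linear_combination (norm := module) h1 • rodrigues ℝ (m + 1) + h2 • derivative (rodrigues ℝ m)

noncomputable def legKernel (k : ℕ) : ℝ[X] := ∑ m ∈ range (k + 1), C (2 * m + 1 : ℝ) * leg m

lemma legKernel_eq_derivative (k : ℕ) : legKernel k = derivative (leg (k + 1) + leg k) := by
  induction k with
  | zero => simp [legKernel, leg_zero, leg_one]
  | succ k ih =>
    rw [legKernel, sum_range_succ, ← legKernel, ih, derivative_add, derivative_add,
      derivative_leg_add_two]
    push_cast; ring

lemma eval_legKernel (k : ℕ) (s : ℝ) :
    (legKernel k).eval s = ∑ m ∈ range (k + 1), (2 * m + 1 : ℝ) * (leg m).eval s := by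
  simp [legKernel, eval_finsetSum]

lemma intervalIntegral_eval_mul_derivative {a b : ℝ} (f g : ℝ[X]) :
    ∫ x in a..b, f.eval x * (derivative g).eval x =
      f.eval b * g.eval b - f.eval a * g.eval a - ∫ x in a..b, (derivative f).eval x * g.eval x :=
  intervalIntegral.integral_mul_deriv_eq_deriv_mul (fun x _ => f.hasDerivAt x)
    (fun x _ => g.hasDerivAt x) ((derivative f).continuous.intervalIntegrable _ _)
    ((derivative g).continuous.intervalIntegrable _ _)

lemma intervalIntegral_eval_mul_iterate_derivative {a b : ℝ} {q : ℝ[X]} {n : ℕ}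
    (hq : ∀ j < n, (derivative^[j] q).eval a = 0 ∧ (derivative^[j] q).eval b = 0) (f : ℝ[X]) :
    ∫ x in a..b, f.eval x * (derivative^[n] q).eval x =
      (-1) ^ n * ∫ x in a..b, (derivative^[n] f).eval x * q.eval x := by
  induction n generalizing q with
  | zero => simp
  | succ n ih =>
    have hq' : ∀ j < n, (derivative^[j] (derivative q)).eval a = 0 ∧
        (derivative^[j] (derivative q)).eval b = 0 := fun j hj =>
      hq (j + 1) (Nat.succ_lt_succ hj)
    obtain ⟨ha, hb⟩ : q.eval a = 0 ∧ q.eval b = 0 := hq 0 n.succ_pos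
    rw [Function.iterate_succ_apply, ih hq', intervalIntegral_eval_mul_derivative,
      Function.iterate_succ_apply', ha, hb]
    ring

lemma intervalIntegral_eval_mul_leg_eq_zero {f : ℝ[X]} {n : ℕ} (hf : f.natDegree < n) :
    ∫ x in (-1 : ℝ)..1, f.eval x * (leg n).eval x = 0 := by
  have hq : ∀ j < n, (derivative^[j] ((X ^ 2 - 1 : ℝ[X]) ^ n)).eval (-1) = 0 ∧
      (derivative^[j] ((X ^ 2 - 1 : ℝ[X]) ^ n)).eval 1 = 0 := fun j hj => by
    obtain ⟨r, hr⟩ := pow_sub_dvd_iterate_derivative_pow (X ^ 2 - 1 : ℝ[X]) n j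
    simp [hr, zero_pow (Nat.sub_ne_zero_of_lt hj)]
  simp only [leg_eq_C_mul_rodrigues, eval_mul, eval_C, mul_left_comm (f.eval _)]
  rw [intervalIntegral.integral_const_mul, rodrigues,
    intervalIntegral_eval_mul_iterate_derivative hq, iterate_derivative_eq_zero hf]
  simp

lemma intervalIntegral_derivative_mul_leg_add_leg_eq_zero {f : ℝ[X]} {k : ℕ}
    (hf : f.natDegree ≤ k) :
    ∫ x in (-1 : ℝ)..1, (derivative f).eval x * (leg (k + 1) + leg k).eval x = 0 := by
  by_cases h0 : f.natDegree = 0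
  · obtain ⟨c, rfl⟩ := natDegree_eq_zero.1 h0
    simp
  have hlt : (derivative f).natDegree < k := (natDegree_derivative_lt h0).trans_le hf
  simp only [eval_add, mul_add]
  rw [intervalIntegral.integral_add (Continuous.intervalIntegrable (by fun_prop) _ _)
      (Continuous.intervalIntegrable (by fun_prop) _ _),
    intervalIntegral_eval_mul_leg_eq_zero (hlt.trans k.lt_succ_self),
    intervalIntegral_eval_mul_leg_eq_zero hlt, add_zero]

lemma intervalIntegral_eval_mul_legKernel {f : ℝ[X]} {k : ℕ} (hf : f.natDegree ≤ k) :
    ∫ x in (-1 : ℝ)..1, f.eval x * (legKernel k).eval x = 2 * f.eval 1 := by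
  rw [legKernel_eq_derivative, intervalIntegral_eval_mul_derivative,
    intervalIntegral_derivative_mul_leg_add_leg_eq_zero hf]
  simp only [eval_add, leg_eval_one, leg_eval_neg_one, pow_succ]
  ring

lemma intervalIntegral_mul_legKernel {u : ℝ → ℝ} (hu : IntervalIntegrable u volume (-1) 1)
    (k : ℕ) :
    ∫ x in (-1 : ℝ)..1, u x * (legKernel k).eval x =
      ∑ m ∈ range (k + 1), (2 * m + 1) * ∫ x in (-1 : ℝ)..1, u x * (leg m).eval x := by
  simp only [eval_legKernel, mul_sum, mul_left_comm (u _)]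
  rw [intervalIntegral.integral_finsetSum fun m _ =>
    ((hu.mul_continuousOn (leg m).continuous.continuousOn).const_mul _)]
  simp only [intervalIntegral.integral_const_mul]

theorem radau_neg_defect_coefficient (k : ℕ) (v : ℝ → ℝ)
    (hv : ContinuousOn v (Set.Icc (-1 : ℝ) 1)) (p : Polynomial ℝ)
    (hp : IsRadauNeg k v p) :
    (∀ m : ℕ, m ≤ k - 1 → m + 1 ≤ k →
      ∫ s in (-1 : ℝ)..1, (v s - p.eval s) * (leg m).eval s = 0) ∧
    (2 * k + 1) / 2 * (∫ s in (-1 : ℝ)..1, (v s - p.eval s) * (leg k).eval s) =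
      -v 1 + (1 / 2) * ∫ s in (-1 : ℝ)..1,
        v s * ∑ m ∈ Finset.range (k + 1), (2 * m + 1 : ℝ) * (leg m).eval s := by
  obtain ⟨hdeg, horth, hval⟩ := hp
  have hlow : ∀ m, m + 1 ≤ k → ∫ s in (-1 : ℝ)..1, (v s - p.eval s) * (leg m).eval s = 0 :=
    fun m hm => horth (leg m) ((Nat.add_le_add_right (natDegree_leg_le m) 1).trans hm)
  refine ⟨fun m _ hm => hlow m hm, ?_⟩
  have hvi : IntervalIntegrable v volume (-1) 1 := hv.intervalIntegrable_of_Icc (by norm_num)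
  have hdefect := intervalIntegral_mul_legKernel (hvi.sub (p.continuous.intervalIntegrable _ _)) k
  rw [sum_range_succ, sum_eq_zero fun m hm => by rw [hlow m (mem_range.1 hm), mul_zero],
    zero_add] at hdefect
  have hsplit : ∫ s in (-1 : ℝ)..1, (v s - p.eval s) * (legKernel k).eval s =
      (∫ s in (-1 : ℝ)..1, v s * (legKernel k).eval s) - 2 * v 1 := by
    rw [← hval, ← intervalIntegral_eval_mul_legKernel hdeg, ← intervalIntegral.integral_sub
      (hvi.mul_continuousOn (legKernel k).continuous.continuousOn)
      (Continuous.intervalIntegrable (by fun_prop) _ _)]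
    simp only [sub_mul]
  simp only [← eval_legKernel]
  linarith
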